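/- arXiv:2407.04142 — 6 statements merged into one kernel-verified Lean document; each statement's English description precedes it below -/
import Mathlib

section
/- Under the BASMU linear structural equation model for a single subject, the average treatment effect between treatment values x and x' decomposes as the sum of the natural indirect and natural direct effects: E[Y(x, M(x)) − Y(x', M(x'))] = (Σ_{j=1}^p β(j) α(j) λ(j)) (x − x') + γ (x − x'). -/
open MeasureTheory

/-- **Mediation decomposition under the BASMU linear structural equation model.**
The average treatment effect between treatment values `x` and `x'` decomposes as the
sum of the natural indirect and natural direct effects:
`E[Y(x, M(x)) − Y(x', M(x'))] = (Σ_j β(j) α(j) λ(j)) (x − x') + γ (x − x')`. -/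
theorem basmu_total_effect_decomposition
    {Ω : Type*} [MeasurableSpace Ω] (P : Measure Ω) [IsProbabilityMeasure P]
    (p q : ℕ) (lam α β ν η : Fin p → ℝ)
    (ξ : Fin q → Fin p → ℝ) (ζ : Fin q → ℝ) (γ : ℝ) (C : Fin q → ℝ)
    (εM : Ω → Fin p → ℝ) (εY : Ω → ℝ)
    (hεM_int : ∀ j, Integrable (fun ω => εM ω j) P)
    (hεM_mean : ∀ j, ∫ ω, εM ω j ∂P = 0)
    (hεY_int : Integrable εY P)
    (hεY_mean : ∫ ω, εY ω ∂P = 0)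
    (M : ℝ → Ω → Fin p → ℝ)
    (hM : ∀ x ω j, M x ω j = (α j * x + (∑ k, ξ k j * C k) + η j) * lam j + εM ω j)
    (Y : ℝ → (Fin p → ℝ) → Ω → ℝ)
    (hY : ∀ x m ω, Y x m ω
      = (∑ j, β j * m j) + γ * x + (∑ k, ζ k * C k) + (∑ j, ν j * η j * lam j) + εY ω)
    (x x' : ℝ) :
    ∫ ω, (Y x (M x ω) ω - Y x' (M x' ω) ω) ∂P
      = (∑ j, β j * α j * lam j) * (x - x') + γ * (x - x') := by
  have key : ∀ ω, Y x (M x ω) ω - Y x' (M x' ω) ω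
      = (∑ j, β j * α j * lam j) * (x - x') + γ * (x - x') := by
    intro ω
    simp only [hY, hM]
    have : ∀ y : ℝ, (∑ j, β j * ((α j * y + ∑ k, ξ k j * C k + η j) * lam j + εM ω j))
        = (∑ j, β j * α j * lam j) * y
          + ∑ j, (β j * ((∑ k, ξ k j * C k + η j) * lam j) + β j * εM ω j) := by
      intro y
      rw [Finset.sum_mul, ← Finset.sum_add_distrib]
      apply Finset.sum_congr rfl
      intro j _
      ring
    rw [this, this]
    ring
  simp only [key]
  simp
end

section
/- (Identifiability of the mediator model, part of Proposition 1.) Suppose W ∈ ℝ^{n×(1+q)} satisfies det(Wᵀ D) ≠ 0 where D = [X | C], and suppose η and η* are both W-balanced with the same vector b. If the mediator means of (α, ξ, η) and of (α*, ξ*, η*) agree for every subject i ∈ Fin n and every grid point j ∈ Fin p, then α = α*, ξ = ξ*, and η = η*. -/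
open Matrix

/-- **Identifiability of the mediator model (part of Proposition 1).**
If `det(Wᵀ D) ≠ 0` for the design matrix `D = [X | C]`, and both families of
individual effects `η`, `η*` are `W`-balanced with the same vector `b`, then equality
of the mediator means `α(j) X(i) + Σ_k ξ(k)(j) C(i)(k) + η(i)(j)` for all subjects `i`
and grid points `j` forces `α = α*`, `ξ = ξ*`, `η = η*`. -/
theorem mediator_model_identifiable
    {n p q : ℕ} (X : Fin n → ℝ) (C : Fin n → Fin q → ℝ)
    (W : Matrix (Fin n) (Fin (q + 1)) ℝ) (b : Fin (q + 1) → ℝ)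
    (hdet : (Wᵀ * Matrix.of (fun i => Fin.cons (X i) (C i))).det ≠ 0)
    (α α' : Fin p → ℝ) (ξ ξ' : Fin q → Fin p → ℝ) (η η' : Fin n → Fin p → ℝ)
    (hbal : ∀ (j : Fin p) (k : Fin (q + 1)), ∑ i, W i k * η i j = b k)
    (hbal' : ∀ (j : Fin p) (k : Fin (q + 1)), ∑ i, W i k * η' i j = b k)
    (hmean : ∀ (i : Fin n) (j : Fin p),
      α j * X i + (∑ k, ξ k j * C i k) + η i j
        = α' j * X i + (∑ k, ξ' k j * C i k) + η' i j) :
    α = α' ∧ ξ = ξ' ∧ η = η' := by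
  set D : Matrix (Fin n) (Fin (q + 1)) ℝ := Matrix.of (fun i => Fin.cons (X i) (C i)) with hD
  set M : Matrix (Fin (q + 1)) (Fin (q + 1)) ℝ := Wᵀ * D with hM
  have hinj : Function.Injective M.mulVec :=
    Matrix.mulVec_injective_iff_isUnit.2 ((Matrix.isUnit_iff_isUnit_det M).2 (isUnit_iff_ne_zero.2 hdet))
  have key : ∀ j : Fin p,
      (Fin.cons (α j - α' j) (fun k => ξ k j - ξ' k j) : Fin (q + 1) → ℝ) = 0 := by
    intro j
    set v : Fin (q + 1) → ℝ := Fin.cons (α j - α' j) (fun k => ξ k j - ξ' k j) with hv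
    have hDv : D *ᵥ v = fun i => η' i j - η i j := by
      funext i
      have := hmean i j
      simp only [Matrix.mulVec, dotProduct, hD, Matrix.of_apply, hv,
        Fin.sum_univ_succ, Fin.cons_zero, Fin.cons_succ]
      have hsum : ∑ k, C i k * (ξ k j - ξ' k j)
          = (∑ k, ξ k j * C i k) - (∑ k, ξ' k j * C i k) := by
        rw [← Finset.sum_sub_distrib]; apply Finset.sum_congr rfl; intros; ring
      rw [hsum]; linarith
    have hMv : M *ᵥ v = 0 := by
      rw [hM, ← Matrix.mulVec_mulVec, hDv]
      funext k
      simp only [Matrix.mulVec, dotProduct, Matrix.transpose_apply, Pi.zero_apply]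
      have : ∑ i, W i k * (η' i j - η i j)
          = (∑ i, W i k * η' i j) - (∑ i, W i k * η i j) := by
        rw [← Finset.sum_sub_distrib]; apply Finset.sum_congr rfl; intros; ring
      simp [this, hbal j k, hbal' j k]
    have : v = 0 := hinj (by simpa using hMv)
    exact this
  have hα : α = α' := by
    funext j
    have := congrFun (key j) 0
    simp only [Fin.cons_zero, Pi.zero_apply] at this
    linarith
  have hξ : ξ = ξ' := by
    funext k j
    have := congrFun (key j) k.succ
    simp only [Fin.cons_succ, Pi.zero_apply] at this
    linarith
  refine ⟨hα, hξ, ?_⟩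
  funext i j
  have := hmean i j
  rw [hα, hξ] at this
  linarith
end

section
/- (Identifiability of the outcome model with low-rank ν, part of Proposition 1.) Assume the n × (1+q+L) design matrix [X | C | θη] has full column rank (its columns are linearly independent in ℝ^n). Suppose ν(j) = Σ_l θν(l) ψ(l)(j) and ν*(j) = Σ_l θν*(l) ψ(l)(j) both lie in the span of the basis ψ. If the outcome means of (β, γ, ζ, ν) and of (β*, γ*, ζ*, ν*) agree for every subject i ∈ Fin n and every mediator value m : Fin p → ℝ, then β = β*, γ = γ*, ζ = ζ*, and ν = ν*. -/
open Matrix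

/-! The outcome mean is affine in `m` with slope `β`, which identifies `β`. Setting `m = 0`,
orthonormality of `ψ` turns `Σ_j ν(j) η(i)(j) λ(j)` into `Σ_l θν(l) θη(i)(l)`, so the
remaining part of the mean is the `i`-th entry of `[X | C | θη]` applied to
`(γ, ζ, θν)`; full column rank identifies these coefficients, and `θν` determines `ν`. -/

theorem eq_of_forall_dotProduct_add_eq {ι R : Type*} [Fintype ι] [DecidableEq ι]
    [NonAssocSemiring R] [IsRightCancelAdd R] {β β' : ι → R} {c c' : R}
    (h : ∀ m, β ⬝ᵥ m + c = β' ⬝ᵥ m + c') : β = β' := by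
  have hc : c = c' := by simpa using h 0
  funext j
  simpa [hc, dotProduct_single] using h (Pi.single j 1)

theorem sum_mul_mul_eq_sum_mul_of_orthonormal {ι κ R : Type*} [Fintype ι] [Fintype κ]
    [DecidableEq κ] [CommSemiring R] {ψ : κ → ι → R} {w : ι → R}
    (hψ : ∀ l l', ∑ j, ψ l j * ψ l' j * w j = if l = l' then 1 else 0) (a b : κ → R) :
    ∑ j, (∑ l, a l * ψ l j) * (∑ l, b l * ψ l j) * w j = ∑ l, a l * b l := by
  calc ∑ j, (∑ l, a l * ψ l j) * (∑ l, b l * ψ l j) * w j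
      = ∑ l, ∑ l', a l * b l' * ∑ j, ψ l j * ψ l' j * w j := by
        simp_rw [Finset.sum_mul_sum, Finset.sum_mul, Finset.mul_sum]
        refine Finset.sum_comm.trans (Finset.sum_congr rfl fun l _ => Finset.sum_comm.trans
          (Finset.sum_congr rfl fun l' _ => Finset.sum_congr rfl fun j _ => ?_))
        ring
    _ = ∑ l, a l * b l := by simp [hψ]

theorem LinearIndependent.eq_of_smul_add_sum_add_sum_eq {R M : Type*} [Semiring R]
    [AddCommMonoid M] [Module R M] {q L : ℕ} {x : M} {u : Fin q → M} {v : Fin L → M}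
    (h : LinearIndependent R (Fin.append (Fin.cons x u) v)) {a a' : R} {b b' : Fin q → R}
    {c c' : Fin L → R}
    (heq : a • x + ∑ k, b k • u k + ∑ l, c l • v l = a' • x + ∑ k, b' k • u k + ∑ l, c' l • v l) :
    a = a' ∧ b = b' ∧ c = c' := by
  have hcoef := Fintype.linearIndependent_iffₛ.mp h
    (Fin.append (Fin.cons a b) c) (Fin.append (Fin.cons a' b') c')
    (by simpa [Fin.sum_univ_add, Fin.sum_univ_succ, add_assoc] using heq)
  refine ⟨by simpa using hcoef (Fin.castAdd L 0), funext fun k => ?_, funext fun l => ?_⟩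
  · simpa using hcoef (Fin.castAdd L k.succ)
  · simpa using hcoef (Fin.natAdd (q + 1) l)

/-- **Identifiability of the outcome model with low-rank ν (part of Proposition 1).**
Suppose the basis `ψ` is orthonormal on the grid, the individual effects `η` have the
low-rank form `η(i)(j) = Σ_l θη(i)(l) ψ(l)(j)`, the design matrix `[X | C | θη]` has
full column rank, and `ν`, `ν*` both lie in the span of `ψ`. Then equality of the
outcome means for every subject `i` and every mediator value `m` forces
`β = β*`, `γ = γ*`, `ζ = ζ*`, `ν = ν*`. -/
theorem outcome_model_identifiable_lowRank
    {n p q L : ℕ} (lam : Fin p → ℝ) (X : Fin n → ℝ) (C : Fin n → Fin q → ℝ)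
    (ψ : Fin L → Fin p → ℝ)
    (hortho : ∀ l l' : Fin L,
      (∑ j, ψ l j * ψ l' j * lam j) = if l = l' then (1 : ℝ) else 0)
    (θη : Fin n → Fin L → ℝ) (η : Fin n → Fin p → ℝ)
    (hη : ∀ i j, η i j = ∑ l, θη i l * ψ l j)
    (hrank : LinearIndependent ℝ
      (Fin.append (Fin.cons X (fun k i => C i k)) (fun l i => θη i l)
        : Fin ((q + 1) + L) → Fin n → ℝ))
    (β β' : Fin p → ℝ) (γ γ' : ℝ) (ζ ζ' : Fin q → ℝ) (ν ν' : Fin p → ℝ)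
    (θν θν' : Fin L → ℝ)
    (hν : ∀ j, ν j = ∑ l, θν l * ψ l j)
    (hν' : ∀ j, ν' j = ∑ l, θν' l * ψ l j)
    (hmean : ∀ (i : Fin n) (m : Fin p → ℝ),
      (∑ j, β j * m j) + γ * X i + (∑ k, ζ k * C i k) + (∑ j, ν j * η i j * lam j)
        = (∑ j, β' j * m j) + γ' * X i + (∑ k, ζ' k * C i k)
          + (∑ j, ν' j * η i j * lam j)) :
    β = β' ∧ γ = γ' ∧ ζ = ζ' ∧ ν = ν' := by
  obtain ⟨i₀, -⟩ : ∃ i, X i ≠ 0 := by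
    simpa [Function.ne_iff] using hrank.ne_zero (Fin.castAdd L 0)
  have hβ : β = β' := eq_of_forall_dotProduct_add_eq fun m => by
    simpa only [dotProduct, add_assoc] using hmean i₀ m
  have hpair (θ : Fin L → ℝ) (i : Fin n) :
      ∑ j, (∑ l, θ l * ψ l j) * η i j * lam j = ∑ l, θ l * θη i l := by
    simp only [hη i]
    exact sum_mul_mul_eq_sum_mul_of_orthonormal hortho θ (θη i)
  have hcols : γ • X + ∑ k, ζ k • (fun i => C i k) + ∑ l, θν l • (fun i => θη i l)
      = γ' • X + ∑ k, ζ' k • (fun i => C i k) + ∑ l, θν' l • (fun i => θη i l) := by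
    funext i
    have hi := hmean i 0
    simp only [hν, hν', hpair] at hi
    simpa [Finset.sum_apply] using hi
  obtain ⟨hγ, hζ, hθν⟩ := hrank.eq_of_smul_add_sum_add_sum_eq hcols
  refine ⟨hβ, hγ, hζ, funext fun j => ?_⟩
  rw [hν, hν', hθν]
end

section
/- (Identifiability of the outcome model with sparse ν, part of Proposition 1.) Assume ν and ν* each have at most m nonzero entries, the grid weights satisfy λ(j) ≠ 0 for all j, and for every subset S ⊆ Fin p with |S| ≤ 2m the n × (1+q+|S|) matrix [X | C | (η(·)(j))_{j∈S}] (whose last |S| columns are the vectors i ↦ η(i)(j) for j ∈ S) has full column rank. If the outcome means of (β, γ, ζ, ν) and of (β*, γ*, ζ*, ν*) agree for every subject i ∈ Fin n and every mediator value m : Fin p → ℝ, then β = β*, γ = γ*, ζ = ζ*, and ν = ν*. -/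
open Matrix

/-- **Identifiability of the outcome model with sparse ν (part of Proposition 1).**
Assume `ν` and `ν*` each have at most `m` nonzero entries, the grid weights are nonzero,
and for every subset `S ⊆ Fin p` with `|S| ≤ 2m` the matrix `[X | C | (η(·)(j))_{j ∈ S}]`
has full column rank (its columns are linearly independent). Then equality of the
outcome means for every subject `i` and every mediator value `m` forces
`β = β*`, `γ = γ*`, `ζ = ζ*`, `ν = ν*`. -/
theorem outcome_model_identifiable_sparse
    {n p q m : ℕ} (lam : Fin p → ℝ) (X : Fin n → ℝ) (C : Fin n → Fin q → ℝ)
    (η : Fin n → Fin p → ℝ)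
    (hlam : ∀ j, lam j ≠ 0)
    (hrank : ∀ S : Finset (Fin p), S.card ≤ 2 * m →
      LinearIndependent ℝ
        (Sum.elim (Fin.cons X (fun k i => C i k)) (fun (j : {j // j ∈ S}) i => η i j.1)
          : (Fin (q + 1)) ⊕ {j // j ∈ S} → Fin n → ℝ))
    (β β' : Fin p → ℝ) (γ γ' : ℝ) (ζ ζ' : Fin q → ℝ) (ν ν' : Fin p → ℝ)
    (hν_sparse : ∃ S : Finset (Fin p), S.card ≤ m ∧ ∀ j ∉ S, ν j = 0)
    (hν'_sparse : ∃ S : Finset (Fin p), S.card ≤ m ∧ ∀ j ∉ S, ν' j = 0)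
    (hmean : ∀ (i : Fin n) (mVal : Fin p → ℝ),
      (∑ j, β j * mVal j) + γ * X i + (∑ k, ζ k * C i k) + (∑ j, ν j * η i j * lam j)
        = (∑ j, β' j * mVal j) + γ' * X i + (∑ k, ζ' k * C i k)
          + (∑ j, ν' j * η i j * lam j)) :
    β = β' ∧ γ = γ' ∧ ζ = ζ' ∧ ν = ν' := by
  obtain ⟨S1, hS1card, hS1⟩ := hν_sparse
  obtain ⟨S2, hS2card, hS2⟩ := hν'_sparse
  classical
  set S : Finset (Fin p) := Finset.filter (fun j => ν j ≠ 0 ∨ ν' j ≠ 0) Finset.univ with hSdef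
  have hSsub : S ⊆ S1 ∪ S2 := by
    intro j hj
    simp only [hSdef, Finset.mem_filter] at hj
    rcases hj.2 with h | h
    · exact Finset.mem_union_left _ (by by_contra hc; exact h (hS1 j hc))
    · exact Finset.mem_union_right _ (by by_contra hc; exact h (hS2 j hc))
  have hScard : S.card ≤ 2 * m := by
    calc S.card ≤ (S1 ∪ S2).card := Finset.card_le_card hSsub
    _ ≤ S1.card + S2.card := Finset.card_union_le _ _
    _ ≤ 2 * m := by omega
  have hli := hrank S hScard
  -- n > 0
  have hn : 0 < n := by
    by_contra hn
    push_neg at hn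
    interval_cases n
    have := hli.ne_zero (Sum.inl 0)
    exact this (funext fun i => i.elim0)
  have i0 : Fin n := ⟨0, hn⟩
  -- β = β'
  have hβ : β = β' := by
    funext j
    have h1 := hmean i0 (Pi.single j (1:ℝ))
    have h0 := hmean i0 0
    simp only [Pi.zero_apply, mul_zero, Finset.sum_const_zero] at h0
    have hs : ∀ b : Fin p → ℝ, (∑ j', b j' * (Pi.single j (1:ℝ) : Fin p → ℝ) j') = b j := by
      intro b
      rw [Finset.sum_eq_single j]
      · simp
      · intro k _ hk; simp [Pi.single_eq_of_ne hk]
      · simp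
    rw [hs β, hs β'] at h1
    linarith
  -- the relation for each i
  have hrel : ∀ i : Fin n,
      (γ - γ') * X i + (∑ k, (ζ k - ζ' k) * C i k)
        + (∑ j ∈ S, (ν j - ν' j) * lam j * η i j) = 0 := by
    intro i
    have h0 := hmean i 0
    simp only [Pi.zero_apply, mul_zero, Finset.sum_const_zero, zero_add] at h0
    have hν0 : ∀ b : Fin p → ℝ, (∀ j ∉ S, b j = 0) →
        (∑ j, b j * η i j * lam j) = ∑ j ∈ S, b j * lam j * η i j := by
      intro b hb
      rw [← Finset.sum_subset (Finset.subset_univ S)]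
      · exact Finset.sum_congr rfl (fun j _ => by ring)
      · intro j _ hj; rw [hb j hj]; ring_nf
    have hmemν : ∀ j ∉ S, ν j = 0 := by
      intro j hj
      simp only [hSdef, Finset.mem_filter, Finset.mem_univ, true_and, not_or,
        not_not] at hj
      exact hj.1
    have hmemν' : ∀ j ∉ S, ν' j = 0 := by
      intro j hj
      simp only [hSdef, Finset.mem_filter, Finset.mem_univ, true_and, not_or,
        not_not] at hj
      exact hj.2
    rw [hν0 ν hmemν, hν0 ν' hmemν'] at h0
    have : ∑ j ∈ S, (ν j - ν' j) * lam j * η i j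
        = (∑ j ∈ S, ν j * lam j * η i j) - ∑ j ∈ S, ν' j * lam j * η i j := by
      rw [← Finset.sum_sub_distrib]
      exact Finset.sum_congr rfl (fun j _ => by ring)
    rw [this]
    have hζ : ∑ k, (ζ k - ζ' k) * C i k
        = (∑ k, ζ k * C i k) - ∑ k, ζ' k * C i k := by
      rw [← Finset.sum_sub_distrib]
      exact Finset.sum_congr rfl (fun k _ => by ring)
    rw [hζ]
    linarith
  -- apply linear independence
  set g : (Fin (q + 1)) ⊕ {j // j ∈ S} → ℝ :=
    Sum.elim (Fin.cons (γ - γ') (fun k => ζ k - ζ' k))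
      (fun j => (ν j.1 - ν' j.1) * lam j.1) with hgdef
  have hgzero : ∀ x, g x = 0 := by
    have := Fintype.linearIndependent_iff.mp hli g ?_
    · exact this
    · funext i
      simp only [Fintype.sum_sum_type, Pi.add_apply, Pi.smul_apply, Finset.sum_apply,
        smul_eq_mul, Sum.elim_inl, Sum.elim_inr, hgdef, Pi.zero_apply]
      rw [Fin.sum_univ_succ]
      simp only [Fin.cons_zero, Fin.cons_succ]
      rw [Finset.sum_coe_sort S (fun j => (ν j - ν' j) * lam j * η i j)]
      exact hrel i
  have hγ : γ = γ' := by
    have := hgzero (Sum.inl 0)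
    simp only [hgdef, Sum.elim_inl, Fin.cons_zero] at this
    linarith
  have hζ : ζ = ζ' := by
    funext k
    have := hgzero (Sum.inl (Fin.succ k))
    simp only [hgdef, Sum.elim_inl, Fin.cons_succ] at this
    linarith
  have hν : ν = ν' := by
    funext j
    by_cases hj : j ∈ S
    · have := hgzero (Sum.inr ⟨j, hj⟩)
      simp only [hgdef, Sum.elim_inr] at this
      have := mul_eq_zero.mp this
      rcases this with h | h
      · linarith
      · exact absurd h (hlam j)
    · simp only [hSdef, Finset.mem_filter, Finset.mem_univ, true_and, not_or,
        not_not] at hj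
      rw [hj.1, hj.2]
  exact ⟨hβ, hγ, hζ, hν⟩
end

section
/- (Proposition 2(ii), BIMA part.) Assume (1/n) M̃_nᵀ M̃_n converges in probability to H + σ_M² I, (1/n) M̃_nᵀ U_n converges in probability to h⁰, and the deterministic matrices satisfy (1/n) D_n → 0. Then H + σ_M² I is invertible, and the conditional bias of the BIMA estimator, B_n = (M̃_nᵀM̃_n + D_n)⁻¹ (M̃_nᵀ U_n − D_n θ⁰), converges in probability to (H + σ_M² I)⁻¹ h⁰. -/
/-!
Rescaling by `1/n` does not change `(S + D)⁻¹ (b - D θ⁰)`, and the rescaled triple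
`(M̃ₙᵀM̃ₙ/n, Dₙ/n, M̃ₙᵀUₙ/n)` converges in probability to the constant `(H + σ_M² I, 0, h⁰)`.
Since `H + σ_M² I` is positive definite, the map `(S, D, b) ↦ (S + D)⁻¹ (b - D θ⁰)` is continuous
there, and the continuous mapping theorem for convergence in probability to a constant finishes
the proof.
-/

open MeasureTheory Matrix Filter Topology

namespace MeasureTheory

variable {α ι E F : Type*} [MeasurableSpace α] {μ : Measure α} {l : Filter ι}

lemma tendstoInMeasure_const_iff [PseudoEMetricSpace E] {f : ι → α → E} {c : E} :
    TendstoInMeasure μ f l (fun _ ↦ c) ↔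
      ∀ s ∈ 𝓝 c, Tendsto (fun i ↦ μ {x | f i x ∉ s}) l (𝓝 0) := by
  refine ⟨fun h s hs ↦ ?_, fun h ε hε ↦ ?_⟩
  · obtain ⟨ε, hε, hball⟩ := EMetric.mem_nhds_iff.mp hs
    refine tendsto_of_tendsto_of_tendsto_of_le_of_le tendsto_const_nhds (h ε hε)
      (fun _ ↦ zero_le) fun i ↦ measure_mono fun x hx ↦ ?_
    by_contra hlt
    exact hx (hball (Metric.mem_eball.mpr (not_le.mp hlt)))
  · simpa only [Metric.mem_eball, not_lt] using h _ (Metric.eball_mem_nhds c hε)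

lemma tendstoInMeasure_const_of_tendsto [PseudoEMetricSpace E] {a : ι → E} {c : E}
    (h : Tendsto a l (𝓝 c)) : TendstoInMeasure μ (fun i _ ↦ a i) l (fun _ ↦ c) := by
  refine tendstoInMeasure_const_iff.mpr fun s hs ↦ tendsto_const_nhds.congr' ?_
  filter_upwards [h hs] with i (hi : a i ∈ s)
  simp [hi]

lemma TendstoInMeasure.comp_continuousAt [PseudoEMetricSpace E] [PseudoEMetricSpace F]
    {f : ι → α → E} {c : E} {g : E → F} (hf : TendstoInMeasure μ f l (fun _ ↦ c))
    (hg : ContinuousAt g c) : TendstoInMeasure μ (fun i x ↦ g (f i x)) l (fun _ ↦ g c) :=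
  tendstoInMeasure_const_iff.mpr fun _ hs ↦ tendstoInMeasure_const_iff.mp hf _ (hg hs)

lemma TendstoInMeasure.prodMk [PseudoEMetricSpace E] [PseudoEMetricSpace F]
    {f : ι → α → E} {g : ι → α → F} {a : E} {b : F}
    (hf : TendstoInMeasure μ f l (fun _ ↦ a)) (hg : TendstoInMeasure μ g l (fun _ ↦ b)) :
    TendstoInMeasure μ (fun i x ↦ (f i x, g i x)) l (fun _ ↦ (a, b)) := by
  refine tendstoInMeasure_const_iff.mpr fun s hs ↦ ?_
  obtain ⟨u, hu, v, hv, huv⟩ := mem_nhds_prod_iff.mp hs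
  have hsum := (tendstoInMeasure_const_iff.mp hf u hu).add (tendstoInMeasure_const_iff.mp hg v hv)
  rw [add_zero] at hsum
  refine tendsto_of_tendsto_of_tendsto_of_le_of_le tendsto_const_nhds hsum
    (fun _ ↦ zero_le) fun i ↦ (measure_mono fun x hx ↦ ?_).trans (measure_union_le _ _)
  by_contra hxuv
  simp only [Set.mem_union, Set.mem_ofPred_eq, not_or, not_not] at hxuv
  exact hx (huv (Set.mk_mem_prod hxuv.1 hxuv.2))

lemma tendstoInMeasure_pi {κ : Type*} [Fintype κ] {E : κ → Type*}
    [∀ j, PseudoEMetricSpace (E j)] {f : ι → α → ∀ j, E j} {c : ∀ j, E j}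
    (h : ∀ j, TendstoInMeasure μ (fun i x ↦ f i x j) l (fun _ ↦ c j)) :
    TendstoInMeasure μ f l (fun _ ↦ c) := by
  refine tendstoInMeasure_const_iff.mpr fun s hs ↦ ?_
  obtain ⟨I, -, t, ht, hts⟩ := Filter.mem_pi.mp (nhds_pi (a := c) ▸ hs)
  have hsum := tendsto_finsetSum Finset.univ fun j _ ↦
    tendstoInMeasure_const_iff.mp (h j) _ (ht j)
  rw [Finset.sum_const_zero] at hsum
  refine tendsto_of_tendsto_of_tendsto_of_le_of_le tendsto_const_nhds hsum (fun _ ↦ zero_le)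
    fun i ↦ (measure_mono fun x hx ↦ ?_).trans (measure_iUnion_fintype_le _ _)
  by_contra hxt
  simp only [Set.mem_iUnion, Set.mem_ofPred_eq, not_exists, not_not] at hxt
  exact hx (hts fun j _ ↦ hxt j)

end MeasureTheory

namespace Matrix

variable {n K : Type*} [Fintype n] [DecidableEq n] [Field K]

/-- With `S = M̃ₙᵀM̃ₙ`, `D = Dₙ`, `b = M̃ₙᵀUₙ` and `θ = θ⁰` this is the bias `Bₙ`. -/
noncomputable def regularizedSolution (θ : n → K) (S D : Matrix n n K) (b : n → K) : n → K :=
  (S + D)⁻¹ *ᵥ (b - D *ᵥ θ)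

lemma inv_smul_mulVec_smul {c : K} (hc : c ≠ 0) (A : Matrix n n K) (v : n → K) :
    (c • A)⁻¹ *ᵥ (c • v) = A⁻¹ *ᵥ v := by
  by_cases hA : IsUnit A.det
  · have := invertibleOfNonzero hc
    rw [Matrix.inv_smul (A := A) c hA, invOf_eq_inv, smul_mulVec, mulVec_smul, smul_smul,
      inv_mul_cancel₀ hc, one_smul]
  · have hcA : ¬IsUnit (c • A).det := by
      simpa [det_smul, hc] using hA
    rw [nonsing_inv_apply_not_isUnit _ hA, nonsing_inv_apply_not_isUnit _ hcA]
    simp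

lemma regularizedSolution_smul (θ : n → K) {c : K} (hc : c ≠ 0) (S D : Matrix n n K)
    (b : n → K) :
    regularizedSolution θ (c • S) (c • D) (c • b) = regularizedSolution θ S D b := by
  rw [regularizedSolution, ← smul_add, smul_mulVec, ← smul_sub, inv_smul_mulVec_smul hc,
    regularizedSolution]

lemma continuousAt_regularizedSolution [TopologicalSpace K] [IsTopologicalDivisionRing K]
    (θ : n → K) {S D : Matrix n n K} (b : n → K) (hSD : (S + D).det ≠ 0) :
    ContinuousAt (fun p : (Matrix n n K × Matrix n n K) × (n → K) ↦
      regularizedSolution θ p.1.1 p.1.2 p.2) ((S, D), b) := by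
  have hinv : ContinuousAt Inv.inv (S + D) := by
    refine continuousAt_matrix_inv _ ?_
    simpa [Ring.inverse_eq_inv'] using continuousAt_inv₀ hSD
  have hsum : ContinuousAt (fun p : (Matrix n n K × Matrix n n K) × (n → K) ↦ (p.1.1 + p.1.2)⁻¹)
      ((S, D), b) :=
    hinv.comp (f := fun p : (Matrix n n K × Matrix n n K) × (n → K) ↦ p.1.1 + p.1.2)
      (by fun_prop)
  exact (continuous_fst.matrix_mulVec continuous_snd).continuousAt.comp
    (hsum.prodMk (by fun_prop))

end Matrix

-- Matrices carry no global metric; the entrywise sup norm lets `tendstoInMeasure_pi` apply.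
attribute [local instance] Matrix.seminormedAddCommGroup

theorem bima_asymptotic_bias_general
    {Ω : Type*} [MeasurableSpace Ω] (P : Measure Ω)
    {L : ℕ} (σM : ℝ) (hσM : 0 < σM)
    (H : Matrix (Fin L) (Fin L) ℝ) (hH : H.PosSemidef)
    (h0 : Fin L → ℝ) (θ0 : Fin L → ℝ)
    (M : (n : ℕ) → Ω → Matrix (Fin n) (Fin L) ℝ)
    (U : (n : ℕ) → Ω → Fin n → ℝ)
    (D : ℕ → Matrix (Fin L) (Fin L) ℝ)
    (hMM : ∀ l l' : Fin L, TendstoInMeasure P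
      (fun (n : ℕ) (ω : Ω) => (n : ℝ)⁻¹ * (((M n ω)ᵀ * M n ω) l l')) atTop
      (fun _ => (H + σM ^ 2 • (1 : Matrix (Fin L) (Fin L) ℝ)) l l'))
    (hMU : ∀ l : Fin L, TendstoInMeasure P
      (fun (n : ℕ) (ω : Ω) => (n : ℝ)⁻¹ * (((M n ω)ᵀ *ᵥ U n ω) l)) atTop
      (fun _ => h0 l))
    (hDlim : Tendsto (fun n : ℕ => ((n : ℝ)⁻¹) • D n) atTop (nhds 0)) :
    IsUnit (H + σM ^ 2 • (1 : Matrix (Fin L) (Fin L) ℝ)) ∧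
      TendstoInMeasure P
        (fun (n : ℕ) (ω : Ω) =>
          ((M n ω)ᵀ * M n ω + D n)⁻¹ *ᵥ ((M n ω)ᵀ *ᵥ U n ω - (D n) *ᵥ θ0)) atTop
        (fun _ => (H + σM ^ 2 • (1 : Matrix (Fin L) (Fin L) ℝ))⁻¹ *ᵥ h0) := by
  set G := H + σM ^ 2 • (1 : Matrix (Fin L) (Fin L) ℝ)
  have hG : G.PosDef := PosDef.posSemidef_add hH (PosDef.one.smul (pow_pos hσM 2))
  refine ⟨hG.isUnit, ?_⟩
  have hMM' : TendstoInMeasure P (fun (n : ℕ) ω ↦ (n : ℝ)⁻¹ • ((M n ω)ᵀ * M n ω)) atTop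
      (fun _ ↦ G) :=
    tendstoInMeasure_pi fun l ↦ tendstoInMeasure_pi fun l' ↦ hMM l l'
  have hMU' : TendstoInMeasure P (fun (n : ℕ) ω ↦ (n : ℝ)⁻¹ • ((M n ω)ᵀ *ᵥ U n ω)) atTop
      (fun _ ↦ h0) :=
    tendstoInMeasure_pi hMU
  have hD' : TendstoInMeasure P (fun (n : ℕ) (_ : Ω) ↦ (n : ℝ)⁻¹ • D n) atTop (fun _ ↦ 0) :=
    tendstoInMeasure_const_of_tendsto hDlim
  have hlim := ((hMM'.prodMk hD').prodMk hMU').comp_continuousAt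
    (continuousAt_regularizedSolution θ0 h0 (by simpa using hG.det_pos.ne'))
  rw [show regularizedSolution θ0 G 0 h0 = G⁻¹ *ᵥ h0 by simp [regularizedSolution]] at hlim
  refine hlim.congr' ?_ (ae_eq_refl _)
  filter_upwards [eventually_ne_atTop 0] with n hn
  exact ae_of_all _ fun ω ↦
    regularizedSolution_smul θ0 (inv_ne_zero (Nat.cast_ne_zero.mpr hn)) _ _ _

/-- **Proposition 2(ii), BIMA part.**
If `(1/n) M̃ₙᵀM̃ₙ → H + σ_M² I` in probability (entrywise), `(1/n) M̃ₙᵀUₙ → h⁰` in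
probability, and the deterministic matrices satisfy `(1/n) Dₙ → 0`, then `H + σ_M² I`
is invertible and the conditional bias of the BIMA estimator,
`Bₙ = (M̃ₙᵀM̃ₙ + Dₙ)⁻¹ (M̃ₙᵀUₙ − Dₙθ⁰)`, converges in probability to
`(H + σ_M² I)⁻¹ h⁰`. -/
theorem bima_asymptotic_bias
    {Ω : Type*} [MeasurableSpace Ω] (P : Measure Ω) [IsProbabilityMeasure P]
    {L : ℕ} (σM : ℝ) (hσM : 0 < σM)
    (H : Matrix (Fin L) (Fin L) ℝ) (hH : H.PosSemidef)
    (h0 : Fin L → ℝ) (θ0 : Fin L → ℝ)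
    (M : (n : ℕ) → Ω → Matrix (Fin n) (Fin L) ℝ)
    (U : (n : ℕ) → Ω → Fin n → ℝ)
    (D : ℕ → Matrix (Fin L) (Fin L) ℝ) (hD : ∀ n, (D n).PosSemidef)
    (hMM : ∀ l l' : Fin L, TendstoInMeasure P
      (fun (n : ℕ) (ω : Ω) => (n : ℝ)⁻¹ * (((M n ω)ᵀ * M n ω) l l')) atTop
      (fun _ => (H + σM ^ 2 • (1 : Matrix (Fin L) (Fin L) ℝ)) l l'))
    (hMU : ∀ l : Fin L, TendstoInMeasure P
      (fun (n : ℕ) (ω : Ω) => (n : ℝ)⁻¹ * (((M n ω)ᵀ *ᵥ U n ω) l)) atTop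
      (fun _ => h0 l))
    (hDlim : Tendsto (fun n : ℕ => ((n : ℝ)⁻¹) • D n) atTop (nhds 0)) :
    IsUnit (H + σM ^ 2 • (1 : Matrix (Fin L) (Fin L) ℝ)) ∧
      TendstoInMeasure P
        (fun (n : ℕ) (ω : Ω) =>
          ((M n ω)ᵀ * M n ω + D n)⁻¹ *ᵥ ((M n ω)ᵀ *ᵥ U n ω - (D n) *ᵥ θ0)) atTop
        (fun _ => (H + σM ^ 2 • (1 : Matrix (Fin L) (Fin L) ℝ))⁻¹ *ᵥ h0) :=
  bima_asymptotic_bias_general P σM hσM H hH h0 θ0 M U D hMM hMU hDlim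
end

section
/- (Gram-matrix law of large numbers underlying Assumption 2(i) and Proposition 2.) Let (e_{i,l})_{i∈ℕ, l∈Fin L} be an independent family of real random variables, each with law gaussianReal 0 σ_M² (mean 0, variance σ_M² > 0), on a probability space. Let θE : ℕ → Fin L → ℝ be deterministic with (1/n) Σ_{i<n} θE(i)(l) θE(i)(l') → H(l,l') as n → ∞ for all l, l' ∈ Fin L. Then for every l, l' ∈ Fin L, the random sequence (1/n) Σ_{i<n} (θE(i)(l) + e_{i,l}) (θE(i)(l') + e_{i,l'}) converges in probability to H(l,l') + σ_M² · (1 if l = l' else 0). -/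
/-!
Expanding the product splits the average into four parts. The signal part
`n⁻¹ ∑ θE i l * θE i l'` converges to `H l l'` by hypothesis. Each cross part
`n⁻¹ ∑ θE i m * e (i, m')` has mean zero and variance `σ² n⁻¹ (n⁻¹ ∑ θE i m ^ 2) → 0`,
so it vanishes in probability by Chebyshev. The rows `(e (i, ·))ᵢ` of the independent
array are i.i.d., so the noise part `n⁻¹ ∑ e (i, l) * e (i, l')` obeys the strong law of
large numbers, with limit `E[e (0, l) * e (0, l')] = σ² 𝟙{l = l'}`.
-/

open MeasureTheory ProbabilityTheory Filter Finset Topology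

theorem MeasureTheory.TendstoInMeasure.add {α ι E : Type*} [MeasurableSpace α]
    {μ : Measure α} [SeminormedAddCommGroup E] {l : Filter ι} {f g : ι → α → E}
    {F G : α → E} (hf : TendstoInMeasure μ f l F) (hg : TendstoInMeasure μ g l G) :
    TendstoInMeasure μ (fun i x => f i x + g i x) l (fun x => F x + G x) := by
  rw [tendstoInMeasure_iff_norm] at hf hg ⊢
  intro ε hε
  have hsplit : ∀ i, {x | ε ≤ ‖f i x + g i x - (F x + G x)‖} ⊆
      {x | ε / 2 ≤ ‖f i x - F x‖} ∪ {x | ε / 2 ≤ ‖g i x - G x‖} := by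
    intro i x hx
    by_contra! h
    simp only [Set.mem_union, Set.mem_ofPred_eq, not_or, not_le] at h hx
    rw [add_sub_add_comm] at hx
    linarith [norm_add_le (f i x - F x) (g i x - G x)]
  refine tendsto_of_tendsto_of_tendsto_of_le_of_le tendsto_const_nhds
    (by simpa using (hf _ (half_pos hε)).add (hg _ (half_pos hε))) (fun _ => zero_le)
    fun i => (measure_mono (hsplit i)).trans (measure_union_le _ _)

theorem ProbabilityTheory.HasLaw.memLp {Ω E : Type*} [MeasurableSpace Ω] {P : Measure Ω}
    [NormedAddCommGroup E] [MeasurableSpace E] {μ : Measure E} {X : Ω → E} {p : ENNReal}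
    (hX : HasLaw X μ P) (hμ : MemLp id p μ) : MemLp X p P := by
  rw [← hX.map_eq] at hμ
  exact (memLp_map_measure_iff hμ.1 hX.aemeasurable).1 hμ

section

variable {Ω : Type*} [MeasurableSpace Ω] {P : Measure Ω}

theorem tendstoInMeasure_average_mul_of_iIndepFun {ι : Type*} [Fintype ι] {μ : Measure ℝ}
    [SigmaFinite μ] {e : ℕ × ι → Ω → ℝ} (hindep : iIndepFun e P)
    (hlaw : ∀ k, HasLaw (e k) μ P) (hμ : MemLp id 2 μ) (l l' : ι) :
    TendstoInMeasure P
      (fun (n : ℕ) ω => (n : ℝ)⁻¹ * ∑ i ∈ range n, e (i, l) ω * e (i, l') ω) atTop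
      (fun _ => P[fun ω => e (0, l) ω * e (0, l') ω]) := by
  have := hindep.isProbabilityMeasure
  set Y : ℕ → Ω → ℝ := fun i => e (i, l) * e (i, l')
  have hrow : ∀ i, HasLaw (fun ω m => e (i, m) ω) (Measure.pi fun _ => μ) P := fun i =>
    (hindep.precomp (Prod.mk_right_injective i)).hasLaw_pi fun m => hlaw (i, m)
  have hY : ∀ i, HasLaw (Y i) ((Measure.pi fun _ => μ).map fun x => x l * x l') P :=
    fun i => HasLaw.comp (Y := fun x : ι → ℝ => x l * x l') ⟨by fun_prop, rfl⟩ (hrow i)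
  have hindepY : Pairwise fun i j => Y i ⟂ᵢ[P] Y j := fun i j hij =>
    hindep.indepFun_mul_mul₀ (fun k => (hlaw k).aemeasurable) _ _ _ _
      (by simp [hij]) (by simp [hij]) (by simp [hij]) (by simp [hij])
  have hslln := strong_law_ae_real Y
    (((hlaw _).memLp hμ).integrable_mul ((hlaw _).memLp hμ)) hindepY
    fun i => (hY i).identDistrib (hY 0)
  have hmeas : ∀ k, AEMeasurable (e k) P := fun k => (hlaw k).aemeasurable
  refine tendstoInMeasure_of_tendsto_ae
    (fun n => (by fun_prop : AEMeasurable _ P).aestronglyMeasurable) (hslln.mono fun ω h => ?_)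
  simpa only [Y, Pi.mul_apply, div_eq_inv_mul] using h

variable [IsProbabilityMeasure P]

theorem tendstoInMeasure_const_of_variance_tendsto_zero {Y : ℕ → Ω → ℝ} {c : ℝ}
    (hY : ∀ n, MemLp (Y n) 2 P) (hmean : ∀ n, P[Y n] = c)
    (hvar : Tendsto (fun n => Var[Y n; P]) atTop (𝓝 0)) :
    TendstoInMeasure P Y atTop (fun _ => c) := by
  rw [tendstoInMeasure_iff_dist]
  intro ε hε
  have hbound : Tendsto (fun n => ENNReal.ofReal (Var[Y n; P] / ε ^ 2)) atTop (𝓝 0) := by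
    simpa using ENNReal.tendsto_ofReal (hvar.div_const (ε ^ 2))
  refine tendsto_of_tendsto_of_tendsto_of_le_of_le tendsto_const_nhds hbound
    (fun _ => zero_le) fun n => ?_
  simpa only [Real.dist_eq, hmean n] using meas_ge_le_variance_div_sq (hY n) hε

theorem tendstoInMeasure_weighted_average_zero {X : ℕ → Ω → ℝ} {v : ℝ}
    (hX : ∀ i, MemLp (X i) 2 P) (hmean : ∀ i, P[X i] = 0) (hvar : ∀ i, Var[X i; P] ≤ v)
    (hindep : Pairwise fun i j => X i ⟂ᵢ[P] X j) {θ : ℕ → ℝ} {a : ℝ}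
    (hθ : Tendsto (fun n : ℕ => (n : ℝ)⁻¹ * ∑ i ∈ range n, θ i ^ 2) atTop (𝓝 a)) :
    TendstoInMeasure P (fun (n : ℕ) ω => (n : ℝ)⁻¹ * ∑ i ∈ range n, θ i * X i ω) atTop
      (fun _ => 0) := by
  have hterm : ∀ i, MemLp (fun ω => θ i * X i ω) 2 P := fun i => (hX i).const_mul _
  refine tendstoInMeasure_const_of_variance_tendsto_zero
    (fun n => (memLp_finsetSum _ fun i _ => hterm i).const_mul _) (fun n => ?_) ?_
  · simp [integral_const_mul, integral_finsetSum _ fun i _ => (hterm i).integrable one_le_two,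
      hmean]
  have hvar_le : ∀ n : ℕ, Var[fun ω => (n : ℝ)⁻¹ * ∑ i ∈ range n, θ i * X i ω; P] ≤
      (n : ℝ)⁻¹ * (((n : ℝ)⁻¹ * ∑ i ∈ range n, θ i ^ 2) * v) := by
    intro n
    have hsum : Var[fun ω => ∑ i ∈ range n, θ i * X i ω; P] =
        ∑ i ∈ range n, θ i ^ 2 * Var[X i; P] := by
      rw [← Finset.sum_fn, IndepFun.variance_sum (fun i _ => hterm i) fun i _ j _ hij =>
        (hindep hij).comp (measurable_const_mul _) (measurable_const_mul _)]
      simp only [variance_const_mul]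
    calc Var[fun ω => (n : ℝ)⁻¹ * ∑ i ∈ range n, θ i * X i ω; P]
        = (n : ℝ)⁻¹ ^ 2 * ∑ i ∈ range n, θ i ^ 2 * Var[X i; P] := by
          rw [variance_const_mul, hsum]
      _ ≤ (n : ℝ)⁻¹ ^ 2 * ∑ i ∈ range n, θ i ^ 2 * v := by gcongr with i; exact hvar i
      _ = _ := by rw [← Finset.sum_mul]; ring
  have hlim : Tendsto (fun n : ℕ => (n : ℝ)⁻¹ * (((n : ℝ)⁻¹ * ∑ i ∈ range n, θ i ^ 2) * v))
      atTop (𝓝 0) := by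
    simpa using tendsto_inv_atTop_nhds_zero_nat.mul (hθ.mul_const v)
  exact tendsto_of_tendsto_of_tendsto_of_le_of_le tendsto_const_nhds hlim
    (fun n => variance_nonneg _ _) hvar_le

theorem ProbabilityTheory.iIndepFun.integral_mul_eq_ite {ι : Type*} [DecidableEq ι]
    {X : ι → Ω → ℝ} {v : ℝ} (hindep : iIndepFun X P) (hX : ∀ k, MemLp (X k) 2 P)
    (hmean : ∀ k, P[X k] = 0) (hvar : ∀ k, Var[X k; P] = v) (a b : ι) :
    P[fun ω => X a ω * X b ω] = v * if a = b then 1 else 0 := by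
  by_cases hab : a = b
  · subst hab
    have hsq := variance_eq_sub (hX a)
    simp only [hvar, hmean] at hsq
    simp [hsq, sq]
  · rw [(hindep.indepFun hab).integral_fun_mul_eq_mul_integral (hX a).1 (hX b).1]
    simp [hab, hmean]

end

theorem gram_matrix_lln_general
    {Ω : Type*} [MeasurableSpace Ω] (P : Measure Ω) [IsProbabilityMeasure P]
    {L : ℕ} (σM : NNReal)
    (e : ℕ × Fin L → Ω → ℝ)
    (he_indep : iIndepFun e P)
    (he_law : ∀ il : ℕ × Fin L, Measure.map (e il) P = gaussianReal 0 (σM ^ 2))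
    (θE : ℕ → Fin L → ℝ) (H : Matrix (Fin L) (Fin L) ℝ)
    (hθE : ∀ l l' : Fin L,
      Tendsto (fun n : ℕ => (n : ℝ)⁻¹ * ∑ i ∈ Finset.range n, θE i l * θE i l')
        atTop (nhds (H l l'))) :
    ∀ l l' : Fin L,
      TendstoInMeasure P
        (fun (n : ℕ) (ω : Ω) =>
          (n : ℝ)⁻¹ * ∑ i ∈ Finset.range n,
            (θE i l + e (i, l) ω) * (θE i l' + e (i, l') ω)) atTop
        (fun _ => H l l' + (σM : ℝ) ^ 2 * (if l = l' then 1 else 0)) := by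
  intro l l'
  -- `Measure.map` sends a map that is not a.e.-measurable to `0`, so a Gaussian law forces it.
  have hlaw : ∀ k, HasLaw (e k) (gaussianReal 0 (σM ^ 2)) P := fun k =>
    ⟨aemeasurable_of_map_neZero (by rw [he_law k]; infer_instance), he_law k⟩
  have hL2 : ∀ k, MemLp (e k) 2 P := fun k => (hlaw k).memLp (memLp_id_gaussianReal 2)
  have hmean : ∀ k, P[e k] = 0 := fun k => (hlaw k).integral_eq.trans integral_id_gaussianReal
  have hvar : ∀ k, Var[e k; P] = (σM : ℝ) ^ 2 := fun k =>
    (hlaw k).variance_eq.trans (by simp [variance_id_gaussianReal])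
  have hsignal : TendstoInMeasure P (fun (n : ℕ) (_ : Ω) =>
      (n : ℝ)⁻¹ * ∑ i ∈ range n, θE i l * θE i l') atTop (fun _ => H l l') :=
    tendstoInMeasure_of_tendsto_ae (fun _ => aestronglyMeasurable_const)
      (ae_of_all _ fun _ => hθE l l')
  have hcross : ∀ m m', TendstoInMeasure P
      (fun (n : ℕ) ω => (n : ℝ)⁻¹ * ∑ i ∈ range n, θE i m * e (i, m') ω) atTop (fun _ => 0) :=
    fun m m' => tendstoInMeasure_weighted_average_zero (fun _ => hL2 _) (fun _ => hmean _)
      (fun _ => (hvar _).le) (fun i j hij => he_indep.indepFun (by simpa using hij))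
      (by simpa only [sq] using hθE m m)
  have hnoise : TendstoInMeasure P
      (fun (n : ℕ) ω => (n : ℝ)⁻¹ * ∑ i ∈ range n, e (i, l) ω * e (i, l') ω) atTop
      (fun _ => (σM : ℝ) ^ 2 * if l = l' then 1 else 0) := by
    have hprod := he_indep.integral_mul_eq_ite hL2 hmean hvar (0, l) (0, l')
    simp only [Prod.mk.injEq, true_and] at hprod
    exact hprod ▸ tendstoInMeasure_average_mul_of_iIndepFun he_indep hlaw
      (memLp_id_gaussianReal 2) l l'
  refine TendstoInMeasure.congr (fun n => ae_of_all _ fun ω => ?_) (ae_of_all _ fun _ => by simp)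
    (((hsignal.add (hcross l l')).add (hcross l' l)).add hnoise)
  simp only [← mul_add, ← Finset.sum_add_distrib]
  congr 1
  exact Finset.sum_congr rfl fun i _ => by ring

/-- **Gram-matrix law of large numbers (underlying Assumption 2(i) and Proposition 2).**
For an independent family `(e_{i,l})` of `N(0, σ_M²)` random variables and deterministic
coefficients `θE` with `(1/n) Σ_{i<n} θE(i)(l) θE(i)(l') → H(l,l')`, the sequence
`(1/n) Σ_{i<n} (θE(i)(l) + e_{i,l})(θE(i)(l') + e_{i,l'})` converges in probability to
`H(l,l') + σ_M² 𝟙{l = l'}` for all `l, l'`. -/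
theorem gram_matrix_lln
    {Ω : Type*} [MeasurableSpace Ω] (P : Measure Ω) [IsProbabilityMeasure P]
    {L : ℕ} (σM : NNReal) (hσM : 0 < σM)
    (e : ℕ × Fin L → Ω → ℝ)
    (he_indep : iIndepFun e P)
    (he_meas : ∀ il : ℕ × Fin L, Measurable (e il))
    (he_law : ∀ il : ℕ × Fin L, Measure.map (e il) P = gaussianReal 0 (σM ^ 2))
    (θE : ℕ → Fin L → ℝ) (H : Matrix (Fin L) (Fin L) ℝ)
    (hθE : ∀ l l' : Fin L,
      Tendsto (fun n : ℕ => (n : ℝ)⁻¹ * ∑ i ∈ Finset.range n, θE i l * θE i l')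
        atTop (nhds (H l l'))) :
    ∀ l l' : Fin L,
      TendstoInMeasure P
        (fun (n : ℕ) (ω : Ω) =>
          (n : ℝ)⁻¹ * ∑ i ∈ Finset.range n,
            (θE i l + e (i, l) ω) * (θE i l' + e (i, l') ω)) atTop
        (fun _ => H l l' + (σM : ℝ) ^ 2 * (if l = l' then 1 else 0)) :=
  gram_matrix_lln_general P σM e he_indep he_law θE H hθE
end
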